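/- Let M be an n×n Boolean matrix and u, v Boolean n-vectors. In the weighted bipartite graph G_{uMv} with nodes s, t, a_1,...,a_n, b_1,...,b_n, edge weights w(a_i,b_j) = 3 − 2·M[i,j], w(s,a_i) = 3 − 2·u[i], w(b_j,t) = 3 − 2·v[j], if uᵀMv = 0 (i.e., for all i, j, u[i]·M[i,j]·v[j] = 0), then every (s,t)-path has total weight at least 5. -/

import Mathlib

/-- Vertices of the graph `G_{uMv}`: a source `s`, a sink `t`,
and two sides `a_1,…,a_n` and `b_1,…,b_n`. -/
inductive Vtx (n : ℕ) where
  | s : Vtx n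
  | t : Vtx n
  | a : Fin n → Vtx n
  | b : Fin n → Vtx n
deriving DecidableEq

/-- Adjacency of `G_{uMv}`: edges between `s` and every `a i`,
between every `a i` and every `b j`, and between every `b j` and `t`. -/
inductive GAdj (n : ℕ) : Vtx n → Vtx n → Prop where
  | sa (i : Fin n) : GAdj n Vtx.s (Vtx.a i)
  | as (i : Fin n) : GAdj n (Vtx.a i) Vtx.s
  | ab (i j : Fin n) : GAdj n (Vtx.a i) (Vtx.b j)
  | ba (i j : Fin n) : GAdj n (Vtx.b j) (Vtx.a i)
  | bt (j : Fin n) : GAdj n (Vtx.b j) Vtx.t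
  | tb (j : Fin n) : GAdj n Vtx.t (Vtx.b j)

/-- Edge weights of `G_{uMv}`: `w(s,aᵢ) = 3 − 2·u[i]`, `w(aᵢ,bⱼ) = 3 − 2·M[i,j]`,
`w(bⱼ,t) = 3 − 2·v[j]`. -/
def gW {n : ℕ} (M : Fin n → Fin n → Bool) (u v : Fin n → Bool) :
    Vtx n → Vtx n → ℕ
  | Vtx.s, Vtx.a i => 3 - 2 * (if u i then 1 else 0)
  | Vtx.a i, Vtx.s => 3 - 2 * (if u i then 1 else 0)
  | Vtx.a i, Vtx.b j => 3 - 2 * (if M i j then 1 else 0)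
  | Vtx.b j, Vtx.a i => 3 - 2 * (if M i j then 1 else 0)
  | Vtx.b j, Vtx.t => 3 - 2 * (if v j then 1 else 0)
  | Vtx.t, Vtx.b j => 3 - 2 * (if v j then 1 else 0)
  | _, _ => 0

/-- The weight of a walk, given as the list of visited vertices:
the sum of the weights of its consecutive edges. -/
def walkWeight {n : ℕ} (w : Vtx n → Vtx n → ℕ) (p : List (Vtx n)) : ℕ :=
  ((p.zip p.tail).map fun q => w q.1 q.2).sum

/-!
Every edge has weight at least `1`, so a walk with at least five edges is heavy enough.
By bipartiteness, the only `(s,t)`-walks with at most four edges are `s, aᵢ, bⱼ, t`,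
and since `u[i]·M[i,j]·v[j] = 0` one of their three edges has weight `3`.
-/

namespace Vtx

variable {n : ℕ}

lemma one_le_gW_of_gAdj (M : Fin n → Fin n → Bool) (u v : Fin n → Bool)
    {x y : Vtx n} (hxy : GAdj n x y) : 1 ≤ gW M u v x y := by
  cases hxy <;> simp only [gW] <;> split <;> omega

lemma walkWeight_cons_cons (w : Vtx n → Vtx n → ℕ) (x y : Vtx n) (l : List (Vtx n)) :
    walkWeight w (x :: y :: l) = w x y + walkWeight w (y :: l) := by
  simp [walkWeight]

lemma length_sub_one_le_walkWeight {w : Vtx n → Vtx n → ℕ}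
    (hw : ∀ x y, GAdj n x y → 1 ≤ w x y) :
    ∀ p : List (Vtx n), List.IsChain (GAdj n) p → p.length - 1 ≤ walkWeight w p
  | [], _ | [_], _ => by simp [walkWeight]
  | x :: y :: l, hc => by
    rw [List.isChain_cons_cons] at hc
    have hrest := length_sub_one_le_walkWeight hw (y :: l) hc.2
    rw [walkWeight_cons_cons]
    simp only [List.length_cons] at hrest ⊢
    have := hw x y hc.1
    omega

lemma eq_s_a_b_t_of_isChain {p : List (Vtx n)} (hs : p.head? = some s)
    (ht : p.getLast? = some t) (hc : List.IsChain (GAdj n) p) (hlen : p.length < 6) :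
    ∃ i j, p = [s, a i, b j, t] := by
  rcases p with _ | ⟨x, _ | ⟨y, _ | ⟨z, _ | ⟨z', _ | ⟨z'', _ | ⟨_, _⟩⟩⟩⟩⟩⟩
  case cons.cons.cons.cons.cons.cons => simp only [List.length_cons] at hlen; omega
  · cases hs
  all_goals simp only [List.head?_cons, Option.some.injEq] at hs
  all_goals subst hs
  · cases ht
  all_goals simp only [List.getLast?_cons_cons, List.getLast?_singleton, Option.some.injEq,
    List.isChain_cons_cons, List.isChain_singleton, and_true] at ht hc
  all_goals subst ht
  · cases hc
  · obtain ⟨h₁, h₂⟩ := hc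
    cases h₁; cases h₂
  · obtain ⟨h₁, h₂, h₃⟩ := hc
    cases h₁; cases h₃; cases h₂
    exact ⟨_, _, rfl⟩
  · obtain ⟨h₁, h₂, h₃, h₄⟩ := hc
    cases h₁; cases h₄; cases h₂ <;> cases h₃

lemma five_le_walkWeight_s_a_b_t {M : Fin n → Fin n → Bool} {u v : Fin n → Bool}
    {i j : Fin n} (h : ¬(u i = true ∧ M i j = true ∧ v j = true)) :
    5 ≤ walkWeight (gW M u v) [s, a i, b j, t] := by
  cases hu : u i <;> cases hm : M i j <;> cases hv : v j <;> simp_all [walkWeight, gW]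

end Vtx

/-- If `uᵀMv = 0`, i.e. `u[i]·M[i,j]·v[j] = 0` for all `i, j`,
then every `(s,t)`-path in `G_{uMv}` has total weight at least `5`. -/
theorem stmt1 (n : ℕ) (M : Fin n → Fin n → Bool) (u v : Fin n → Bool)
    (h : ∀ i j, ¬(u i = true ∧ M i j = true ∧ v j = true)) :
    ∀ p : List (Vtx n), p.head? = some Vtx.s → p.getLast? = some Vtx.t →
      List.Chain' (GAdj n) p → p.Nodup → 5 ≤ walkWeight (gW M u v) p := by
  intro p hs ht hc _
  by_cases hlen : p.length < 6
  · obtain ⟨i, j, rfl⟩ := Vtx.eq_s_a_b_t_of_isChain hs ht hc hlen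
    exact Vtx.five_le_walkWeight_s_a_b_t (h i j)
  · have := Vtx.length_sub_one_le_walkWeight (fun _ _ => Vtx.one_le_gW_of_gAdj M u v) p hc
    omega
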